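/- There exists a pair of quantum instruments that is parallelly compatible but not weakly compatible (and hence not traditionally compatible). Concretely: take compatible channels Λ₁ ≠ Λ₂ arising as marginals of a joint channel Λ, and instruments I₁ = {Φ'¹_x ∘ Λ₁}, I₂ = {Φ'²_y ∘ Λ₂} with Γ₁ ∘ Λ₁ ≠ Γ₂ ∘ Λ₂; then I₁ and I₂ are parallelly compatible but Σ_x Φ¹_x ≠ Σ_y Φ²_y. -/

import Mathlib

open Matrix BigOperators ComplexOrder

noncomputable section

/-- Partial trace over the second tensor factor. -/
def ptraceRight {A B : Type*} [Fintype B] (M : Matrix (A × B) (A × B) ℂ) :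
    Matrix A A ℂ := fun i j => ∑ k, M (i, k) (j, k)

/-- Partial trace over the first tensor factor. -/
def ptraceLeft {A B : Type*} [Fintype A] (M : Matrix (A × B) (A × B) ℂ) :
    Matrix B B ℂ := fun i j => ∑ k, M (k, i) (k, j)

/-- Complete positivity, via existence of a Kraus decomposition (Choi's theorem). -/
def IsCP {H K : Type*} [Fintype H] [Fintype K]
    (Φ : Matrix H H ℂ →ₗ[ℂ] Matrix K K ℂ) : Prop :=
  ∃ (m : ℕ) (Ks : Fin m → Matrix K H ℂ), ∀ ρ, Φ ρ = ∑ i, Ks i * ρ * (Ks i)ᴴ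

def IsTP {H K : Type*} [Fintype H] [Fintype K]
    (Φ : Matrix H H ℂ →ₗ[ℂ] Matrix K K ℂ) : Prop :=
  ∀ ρ, (Φ ρ).trace = ρ.trace

/-- A quantum channel is a CPTP map. -/
def IsChannel {H K : Type*} [Fintype H] [Fintype K]
    (Φ : Matrix H H ℂ →ₗ[ℂ] Matrix K K ℂ) : Prop := IsCP Φ ∧ IsTP Φ

/-- A quantum instrument: a finite family of CP maps summing to a CPTP map. -/
def IsInstrument {ι H K : Type*} [Fintype ι] [Fintype H] [Fintype K]
    (Φ : ι → (Matrix H H ℂ →ₗ[ℂ] Matrix K K ℂ)) : Prop :=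
  (∀ x, IsCP (Φ x)) ∧ IsTP (∑ x, Φ x)

def IsDensity {H : Type*} [Fintype H] (ρ : Matrix H H ℂ) : Prop :=
  ρ.PosSemidef ∧ ρ.trace = 1

def IsPOVM {ι H : Type*} [Fintype ι] [Fintype H] [DecidableEq H]
    (A : ι → Matrix H H ℂ) : Prop :=
  (∀ x, (A x).PosSemidef) ∧ (∑ x, A x) = 1

/-- `Φd` is the Heisenberg dual of `Φ`. -/
def IsDual {H K : Type*} [Fintype H] [Fintype K]
    (Φ : Matrix H H ℂ →ₗ[ℂ] Matrix K K ℂ)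
    (Φd : Matrix K K ℂ →ₗ[ℂ] Matrix H H ℂ) : Prop :=
  ∀ ρ X, ((Φ ρ) * X).trace = (ρ * Φd X).trace

/-- The instrument `I` measures the observable `A`. -/
def ACompatible {ι H K : Type*} [Fintype ι] [Fintype H] [Fintype K]
    (A : ι → Matrix H H ℂ) (I : ι → (Matrix H H ℂ →ₗ[ℂ] Matrix K K ℂ)) : Prop :=
  ∀ ρ, IsDensity ρ → ∀ x, (I x ρ).trace = (ρ * A x).trace

/-- Observable-observable compatibility: existence of a joint POVM. -/
def ObsCompatible {ιx ιy H : Type*} [Fintype ιx] [Fintype ιy] [Fintype H] [DecidableEq H]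
    (A : ιx → Matrix H H ℂ) (B : ιy → Matrix H H ℂ) : Prop :=
  ∃ G : ιx × ιy → Matrix H H ℂ, IsPOVM G ∧
    (∀ x, ∑ y, G (x, y) = A x) ∧ (∀ y, ∑ x, G (x, y) = B y)

/-- Channel-channel compatibility: existence of a joint channel. -/
def ChannelsCompatible {H K₁ K₂ : Type*} [Fintype H] [Fintype K₁] [Fintype K₂]
    (Λ₁ : Matrix H H ℂ →ₗ[ℂ] Matrix K₁ K₁ ℂ)
    (Λ₂ : Matrix H H ℂ →ₗ[ℂ] Matrix K₂ K₂ ℂ) : Prop :=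
  ∃ Λ : Matrix H H ℂ →ₗ[ℂ] Matrix (K₁ × K₂) (K₁ × K₂) ℂ, IsChannel Λ ∧
    (∀ ρ, ptraceRight (Λ ρ) = Λ₁ ρ) ∧ (∀ ρ, ptraceLeft (Λ ρ) = Λ₂ ρ)

/-- Observable-channel compatibility. -/
def ObsChannelCompatible {ι H K : Type*} [Fintype ι] [Fintype H] [Fintype K]
    (A : ι → Matrix H H ℂ) (Λ : Matrix H H ℂ →ₗ[ℂ] Matrix K K ℂ) : Prop :=
  ∃ I : ι → (Matrix H H ℂ →ₗ[ℂ] Matrix K K ℂ),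
    IsInstrument I ∧ ACompatible A I ∧ (∑ x, I x) = Λ

/-- Traditional compatibility of two instruments with the same output space. -/
def TraditionallyCompatible {ιx ιy H K : Type*} [Fintype ιx] [Fintype ιy] [Fintype H] [Fintype K]
    (I₁ : ιx → (Matrix H H ℂ →ₗ[ℂ] Matrix K K ℂ))
    (I₂ : ιy → (Matrix H H ℂ →ₗ[ℂ] Matrix K K ℂ)) : Prop :=
  ∃ Φ : ιx × ιy → (Matrix H H ℂ →ₗ[ℂ] Matrix K K ℂ), IsInstrument Φ ∧
    (∀ x, ∑ y, Φ (x, y) = I₁ x) ∧ (∀ y, ∑ x, Φ (x, y) = I₂ y)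

/-- Parallel compatibility of two instruments. -/
def ParallelCompatible {ιx ιy H K₁ K₂ : Type*} [Fintype ιx] [Fintype ιy]
    [Fintype H] [Fintype K₁] [Fintype K₂]
    (I₁ : ιx → (Matrix H H ℂ →ₗ[ℂ] Matrix K₁ K₁ ℂ))
    (I₂ : ιy → (Matrix H H ℂ →ₗ[ℂ] Matrix K₂ K₂ ℂ)) : Prop :=
  ∃ Φ : ιx × ιy → (Matrix H H ℂ →ₗ[ℂ] Matrix (K₁ × K₂) (K₁ × K₂) ℂ), IsInstrument Φ ∧
    (∀ x ρ, ∑ y, ptraceRight (Φ (x, y) ρ) = I₁ x ρ) ∧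
    (∀ y ρ, ∑ x, ptraceLeft (Φ (x, y) ρ) = I₂ y ρ)

/-- Tensor product of two maps on matrix algebras. -/
def tensorMap {A B C D : Type*} [Fintype A] [Fintype B] [Fintype C] [Fintype D]
    [DecidableEq A] [DecidableEq B]
    (Φ : Matrix A A ℂ →ₗ[ℂ] Matrix C C ℂ) (Ψ : Matrix B B ℂ →ₗ[ℂ] Matrix D D ℂ) :
    Matrix (A × B) (A × B) ℂ →ₗ[ℂ] Matrix (C × D) (C × D) ℂ where
  toFun M := fun p q => ∑ a, ∑ a', ∑ b, ∑ b',
    M (a, b) (a', b') * (Φ (Matrix.single a a' 1)) p.1 q.1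
      * (Ψ (Matrix.single b b' 1)) p.2 q.2
  map_add' M N := by
    funext p q
    show _ = (_ : ℂ) + _
    simp [Matrix.add_apply, add_mul, Finset.sum_add_distrib]
  map_smul' c M := by
    funext p q
    show _ = c * _
    simp [Matrix.smul_apply, Finset.mul_sum, mul_assoc]


/-! Appending an ancilla in the fixed state `|k₀⟩` is an isometric channel `H → H ⊗ K` whose two
marginals are the identity channel and the channel that discards the input and prepares `|k₀⟩`.
Regarded as one-outcome instruments, these two compatible channels are parallel compatible, but
their total channels differ, whereas any joint instrument in the traditional sense has both
families summing to its own total channel. -/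

lemma IsCP.of_kraus {ι H K : Type*} [Fintype ι] [Fintype H] [Fintype K]
    {Φ : Matrix H H ℂ →ₗ[ℂ] Matrix K K ℂ} (Ks : ι → Matrix K H ℂ)
    (hΦ : ∀ ρ, Φ ρ = ∑ i, Ks i * ρ * (Ks i)ᴴ) : IsCP Φ := by
  let e := Fintype.equivFin ι
  refine ⟨Fintype.card ι, Ks ∘ e.symm, fun ρ => ?_⟩
  rw [hΦ, ← e.symm.sum_comp]
  rfl

def conjBy {H K : Type*} [Fintype H] (V : Matrix K H ℂ) : Matrix H H ℂ →ₗ[ℂ] Matrix K K ℂ where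
  toFun ρ := V * ρ * Vᴴ
  map_add' ρ σ := by simp only [Matrix.mul_add, Matrix.add_mul]
  map_smul' c ρ := by simp only [Matrix.mul_smul, Matrix.smul_mul, RingHom.id_apply]

@[simp]
lemma conjBy_apply {H K : Type*} [Fintype H] (V : Matrix K H ℂ) (ρ : Matrix H H ℂ) :
    conjBy V ρ = V * ρ * Vᴴ := rfl

lemma isChannel_id {H : Type*} [Fintype H] [DecidableEq H] :
    IsChannel (LinearMap.id : Matrix H H ℂ →ₗ[ℂ] Matrix H H ℂ) :=
  ⟨IsCP.of_kraus (fun _ : Unit => 1) fun ρ => by simp, fun _ => rfl⟩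

lemma isChannel_conjBy {H K : Type*} [Fintype H] [Fintype K] [DecidableEq H]
    {V : Matrix K H ℂ} (hV : Vᴴ * V = 1) : IsChannel (conjBy V) :=
  ⟨IsCP.of_kraus (fun _ : Unit => V) fun ρ => by simp,
    fun ρ => by rw [conjBy_apply, Matrix.trace_mul_cycle, hV, Matrix.one_mul]⟩

section SingleOutcome

variable {ι ιx ιy H K₁ K₂ : Type*} [Fintype H] [Fintype K₁] [Fintype K₂]

lemma isInstrument_const [Fintype ι] [Unique ι] {Φ : Matrix H H ℂ →ₗ[ℂ] Matrix K₁ K₁ ℂ}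
    (hΦ : IsChannel Φ) : IsInstrument (fun _ : ι => Φ) :=
  ⟨fun _ => hΦ.1, by rw [Fintype.sum_unique]; exact hΦ.2⟩

lemma ChannelsCompatible.parallelCompatible_const [Fintype ιx] [Unique ιx] [Fintype ιy]
    [Unique ιy] {Λ₁ : Matrix H H ℂ →ₗ[ℂ] Matrix K₁ K₁ ℂ} {Λ₂ : Matrix H H ℂ →ₗ[ℂ] Matrix K₂ K₂ ℂ}
    (h : ChannelsCompatible Λ₁ Λ₂) :
    ParallelCompatible (fun _ : ιx => Λ₁) (fun _ : ιy => Λ₂) := by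
  obtain ⟨Λ, hΛ, h₁, h₂⟩ := h
  have : Unique (ιx × ιy) := Unique.mk' _
  exact ⟨fun _ => Λ, isInstrument_const hΛ, fun _ ρ => by simp [h₁], fun _ ρ => by simp [h₂]⟩

end SingleOutcome

lemma TraditionallyCompatible.sum_eq {ιx ιy H K : Type*} [Fintype ιx] [Fintype ιy] [Fintype H]
    [Fintype K] {I₁ : ιx → (Matrix H H ℂ →ₗ[ℂ] Matrix K K ℂ)}
    {I₂ : ιy → (Matrix H H ℂ →ₗ[ℂ] Matrix K K ℂ)} (h : TraditionallyCompatible I₁ I₂) :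
    ∑ x, I₁ x = ∑ y, I₂ y := by
  obtain ⟨Φ, -, h₁, h₂⟩ := h
  simp only [← h₁, ← h₂]
  exact Finset.sum_comm

section Replacement

variable {H K : Type*} [Fintype H] [DecidableEq K]

def replacementChannel (k₀ : K) : Matrix H H ℂ →ₗ[ℂ] Matrix K K ℂ :=
  (Matrix.traceLinearMap H ℂ ℂ).smulRight (Matrix.single k₀ k₀ 1)

@[simp]
lemma replacementChannel_apply (k₀ : K) (ρ : Matrix H H ℂ) :
    replacementChannel k₀ ρ = ρ.trace • Matrix.single k₀ k₀ 1 := rfl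

lemma isChannel_replacementChannel [Fintype K] [DecidableEq H] (k₀ : K) :
    IsChannel (replacementChannel (H := H) k₀) := by
  refine ⟨IsCP.of_kraus (fun i : H => Matrix.single k₀ i 1) fun ρ => ?_, fun ρ => by simp⟩
  simp only [replacementChannel_apply, Matrix.conjTranspose_single, star_one,
    Matrix.single_mul_mul_single, one_mul, mul_one, Matrix.smul_single, smul_eq_mul]
  exact map_sum (Matrix.singleAddMonoidHom k₀ k₀) _ _

def appendAncilla [DecidableEq H] (k₀ : K) : Matrix (H × K) H ℂ :=
  fun p i => if p = (i, k₀) then 1 else 0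

lemma conjTranspose_appendAncilla_mul [Fintype K] [DecidableEq H] (k₀ : K) :
    (appendAncilla (H := H) k₀)ᴴ * appendAncilla (H := H) k₀ = 1 := by
  ext i j
  simp [appendAncilla, Matrix.mul_apply, Matrix.one_apply, eq_comm]

lemma conjBy_appendAncilla_apply [DecidableEq H] (k₀ : K) (ρ : Matrix H H ℂ) (i k : H) (j l : K) :
    conjBy (appendAncilla k₀) ρ (i, j) (k, l) = if j = k₀ ∧ l = k₀ then ρ i k else 0 := by
  by_cases hj : j = k₀ <;> by_cases hl : l = k₀ <;>
    simp [appendAncilla, Matrix.mul_apply, apply_ite (starRingEnd ℂ), hj, hl]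

lemma ptraceRight_conjBy_appendAncilla [Fintype K] [DecidableEq H] (k₀ : K) (ρ : Matrix H H ℂ) :
    ptraceRight (conjBy (appendAncilla k₀) ρ) = ρ := by
  ext i k
  simp [ptraceRight, conjBy_appendAncilla_apply]

lemma ptraceLeft_conjBy_appendAncilla [DecidableEq H] (k₀ : K) (ρ : Matrix H H ℂ) :
    ptraceLeft (conjBy (appendAncilla k₀) ρ) = replacementChannel k₀ ρ := by
  ext j l
  simp [ptraceLeft, conjBy_appendAncilla_apply, Matrix.single_apply, Matrix.trace, eq_comm]

lemma channelsCompatible_id_replacementChannel [Fintype K] [DecidableEq H] (k₀ : K) :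
    ChannelsCompatible LinearMap.id (replacementChannel (H := H) k₀) :=
  ⟨conjBy (appendAncilla k₀), isChannel_conjBy (conjTranspose_appendAncilla_mul k₀),
    ptraceRight_conjBy_appendAncilla k₀, ptraceLeft_conjBy_appendAncilla k₀⟩

lemma id_ne_replacementChannel [Fintype K] {i k₀ : K} (h : i ≠ k₀) :
    LinearMap.id ≠ replacementChannel (H := K) k₀ := by
  intro hid
  have := congr($hid (Matrix.single i i 1) i i)
  simp [h.symm] at this

end Replacement

/-- There exists a pair of quantum instruments that is parallelly compatible
but not weakly compatible (and hence not traditionally compatible). -/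
theorem stmt_8 :
    ∃ (I₁ I₂ : Fin 1 → (Matrix (Fin 2) (Fin 2) ℂ →ₗ[ℂ] Matrix (Fin 2) (Fin 2) ℂ)),
      IsInstrument I₁ ∧ IsInstrument I₂ ∧ ParallelCompatible I₁ I₂ ∧
      (∑ x, I₁ x) ≠ (∑ y, I₂ y) ∧ ¬ TraditionallyCompatible I₁ I₂ := by
  have hne : (∑ _ : Fin 1, LinearMap.id) ≠ ∑ _ : Fin 1, replacementChannel (H := Fin 2) 0 := by
    simpa only [Fintype.sum_unique] using id_ne_replacementChannel (by decide : (1 : Fin 2) ≠ 0)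
  exact ⟨_, _, isInstrument_const isChannel_id, isInstrument_const (isChannel_replacementChannel 0),
    (channelsCompatible_id_replacementChannel 0).parallelCompatible_const, hne,
    fun h => hne h.sum_eq⟩

end
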